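/- Fix an integer N ≥ 2 and reals T_− < T_+. Suppose M : {(k,ℓ) : 0 ≤ k ≤ ℓ ≤ N} → ℝ satisfies: (1/4)(M_{k−1,ℓ} + M_{k+1,ℓ} + M_{k,ℓ−1} + M_{k,ℓ+1}) = M_{k,ℓ} whenever 1 < k+1 < ℓ < N; (3/10)(M_{ℓ−2,ℓ} + M_{ℓ−1,ℓ+1}) + (1/5)(M_{ℓ−1,ℓ−1} + M_{ℓ,ℓ}) = M_{ℓ−1,ℓ} for 1 < ℓ < N; (1/4)(M_{k−1,k−1} + M_{k−1,k} + M_{k+1,k+1} + M_{k,k+1}) = M_{k,k} for 0 < k < N; M_{0,ℓ} = T_− m_ℓ for 0 ≤ ℓ ≤ N and M_{k,N} = m_k T_+ for 0 ≤ k ≤ N, where m_k = T_− + (k/N)(T_+−T_−) (here off-diagonal entries M_{k,ℓ} with k > ℓ are interpreted as M_{ℓ,k}). Then M_{k,ℓ} ≤ M̃_{k,ℓ} for all 0 ≤ k ≤ ℓ ≤ N, where M̃ is defined by M̃_{k,ℓ} = A k + B ℓ + C k ℓ + D for k < ℓ and M̃_{k,k} = C k² + (A+B)k + E, with A = (T_+−T_−)(T_+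 + N T_−)/(N(N+1)), B = T_−(T_+−T_−)/N, C = (T_+−T_−)²/(N(N+1)), D = T_−², E = (T_+−T_−)²/(2N(N+1)) + T_−². -/
import Mathlib


/-- The linear interpolation `m_k = T₋ + (k/N)(T₊ − T₋)`. -/
noncomputable def mlin (N : ℕ) (Tm Tp : ℝ) (k : ℕ) : ℝ :=
  Tm + (k : ℝ) / N * (Tp - Tm)

/-- The explicit modified second moments `M̃_{k,ℓ}` (for `k ≤ ℓ`). -/
noncomputable def Mt (N : ℕ) (Tm Tp : ℝ) (k l : ℕ) : ℝ :=
  let A : ℝ := (Tp - Tm) * (Tp + N * Tm) / (N * (N + 1))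
  let B : ℝ := Tm * (Tp - Tm) / N
  let C : ℝ := (Tp - Tm) ^ 2 / (N * (N + 1))
  let D : ℝ := Tm ^ 2
  let E : ℝ := (Tp - Tm) ^ 2 / (2 * N * (N + 1)) + Tm ^ 2
  if k < l then A * k + B * l + C * (k * l) + D
  else C * k ^ 2 + (A + B) * k + E

lemma Mt_of_lt (N : ℕ) (Tm Tp : ℝ) {k l : ℕ} (h : k < l) : Mt N Tm Tp k l =
    (Tp - Tm) * (Tp + N * Tm) / (N * (N + 1)) * k + Tm * (Tp - Tm) / N * l
      + (Tp - Tm) ^ 2 / (N * (N + 1)) * (k * l) + Tm ^ 2 := by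
  simp only [Mt, if_pos h]

lemma Mt_of_diag (N : ℕ) (Tm Tp : ℝ) (k : ℕ) : Mt N Tm Tp k k =
    (Tp - Tm) ^ 2 / (N * (N + 1)) * k ^ 2
      + ((Tp - Tm) * (Tp + N * Tm) / (N * (N + 1)) + Tm * (Tp - Tm) / N) * k
      + ((Tp - Tm) ^ 2 / (2 * N * (N + 1)) + Tm ^ 2) := by
  simp only [Mt, if_neg (lt_irrefl k)]

lemma Mt_id_i (N : ℕ) (Tm Tp : ℝ) (hN : (0:ℝ) < N) (a b : ℕ) (h : a + 1 < b) :
    (1/4) * (Mt N Tm Tp a (b+1) + Mt N Tm Tp (a+2) (b+1)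
      + Mt N Tm Tp (a+1) b + Mt N Tm Tp (a+1) (b+2)) = Mt N Tm Tp (a+1) (b+1) := by
  have hN0 : (N:ℝ) ≠ 0 := ne_of_gt hN
  have hN1 : (N:ℝ) + 1 ≠ 0 := by positivity
  rw [Mt_of_lt N Tm Tp (show a < b+1 by omega), Mt_of_lt N Tm Tp (show a+2 < b+1 by omega),
    Mt_of_lt N Tm Tp (show a+1 < b by omega), Mt_of_lt N Tm Tp (show a+1 < b+2 by omega),
    Mt_of_lt N Tm Tp (show a+1 < b+1 by omega)]
  push_cast
  field_simp
  ring

lemma Mt_id_ii (N : ℕ) (Tm Tp : ℝ) (hN : (0:ℝ) < N) (a : ℕ) :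
    (3/10) * (Mt N Tm Tp a (a+2) + Mt N Tm Tp (a+1) (a+3))
      + (1/5) * (Mt N Tm Tp (a+1) (a+1) + Mt N Tm Tp (a+2) (a+2))
      = Mt N Tm Tp (a+1) (a+2) := by
  have hN0 : (N:ℝ) ≠ 0 := ne_of_gt hN
  have hN1 : (N:ℝ) + 1 ≠ 0 := by positivity
  rw [Mt_of_lt N Tm Tp (show a < a+2 by omega), Mt_of_lt N Tm Tp (show a+1 < a+3 by omega),
    Mt_of_diag, Mt_of_diag, Mt_of_lt N Tm Tp (show a+1 < a+2 by omega)]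
  push_cast
  field_simp
  ring

lemma Mt_id_iii (N : ℕ) (Tm Tp : ℝ) (hN : (0:ℝ) < N) (a : ℕ) :
    (1/4) * (Mt N Tm Tp a a + Mt N Tm Tp a (a+1)
      + Mt N Tm Tp (a+2) (a+2) + Mt N Tm Tp (a+1) (a+2)) = Mt N Tm Tp (a+1) (a+1) := by
  have hN0 : (N:ℝ) ≠ 0 := ne_of_gt hN
  have hN1 : (N:ℝ) + 1 ≠ 0 := by positivity
  rw [Mt_of_diag, Mt_of_lt N Tm Tp (show a < a+1 by omega), Mt_of_diag,
    Mt_of_lt N Tm Tp (show a+1 < a+2 by omega), Mt_of_diag]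
  push_cast
  field_simp
  ring

lemma Mt_bd_left (N : ℕ) (Tm Tp : ℝ) (hN : (0:ℝ) < N) (l : ℕ) :
    Tm * mlin N Tm Tp l ≤ Mt N Tm Tp 0 l := by
  have hN0 : (N:ℝ) ≠ 0 := ne_of_gt hN
  have hN1 : (N:ℝ) + 1 ≠ 0 := by positivity
  rcases Nat.eq_zero_or_pos l with rfl | hl
  · rw [Mt_of_diag]
    simp only [mlin, Nat.cast_zero, zero_div, zero_mul, add_zero, mul_zero, zero_pow,
      ne_eq, OfNat.ofNat_ne_zero, not_false_eq_true]
    have h0 : (0:ℝ) ≤ (Tp - Tm) ^ 2 / (2 * (N:ℝ) * ((N:ℝ) + 1)) := by positivity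
    nlinarith [h0]
  · rw [Mt_of_lt N Tm Tp hl]
    apply le_of_eq
    unfold mlin
    field_simp
    ring

lemma Mt_bd_top (N : ℕ) (Tm Tp : ℝ) (hN : (0:ℝ) < N) (k : ℕ) (hk : k ≤ N) :
    mlin N Tm Tp k * Tp ≤ Mt N Tm Tp k N := by
  have hN0 : (N:ℝ) ≠ 0 := ne_of_gt hN
  have hN1 : (N:ℝ) + 1 ≠ 0 := by positivity
  rcases lt_or_eq_of_le hk with hk2 | hk2
  · rw [Mt_of_lt N Tm Tp hk2]
    apply le_of_eq
    unfold mlin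
    field_simp
    ring
  · subst hk2
    rw [Mt_of_diag]
    unfold mlin
    rw [div_self hN0]
    have h0 : (0:ℝ) ≤ (Tp - Tm) ^ 2 / (2 * (k:ℝ) * ((k:ℝ) + 1)) := by positivity
    have key : (Tp - Tm) ^ 2 / ((k:ℝ) * ((k:ℝ) + 1)) * (k:ℝ) ^ 2
        + ((Tp - Tm) * (Tp + (k:ℝ) * Tm) / ((k:ℝ) * ((k:ℝ) + 1)) + Tm * (Tp - Tm) / (k:ℝ)) * (k:ℝ)
        + ((Tp - Tm) ^ 2 / (2 * (k:ℝ) * ((k:ℝ) + 1)) + Tm ^ 2)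
        = Tp ^ 2 + (Tp - Tm) ^ 2 / (2 * (k:ℝ) * ((k:ℝ) + 1)) := by
      field_simp
      ring
    nlinarith [h0, key]

/-- any solution `M` of the two-point correlation system (with the true
boundary data `M_{0,ℓ} = T₋ m_ℓ`, `M_{k,N} = m_k T₊`, off-diagonal entries interpreted
symmetrically) is dominated by the explicit supersolution `M̃`. -/
theorem two_point_comparison
    (N : ℕ) (hN : 2 ≤ N) (Tm Tp : ℝ) (hT : Tm < Tp)
    (M : ℕ → ℕ → ℝ)
    (hsym : ∀ k l, M k l = M l k)
    (hi : ∀ k l : ℕ, 1 ≤ k → k + 1 < l → l < N →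
        (1 / 4) * (M (k - 1) l + M (k + 1) l + M k (l - 1) + M k (l + 1)) = M k l)
    (hii : ∀ l : ℕ, 1 < l → l < N →
        (3 / 10) * (M (l - 2) l + M (l - 1) (l + 1))
            + (1 / 5) * (M (l - 1) (l - 1) + M l l) = M (l - 1) l)
    (hiii : ∀ k : ℕ, 0 < k → k < N →
        (1 / 4) * (M (k - 1) (k - 1) + M (k - 1) k + M (k + 1) (k + 1) + M k (k + 1))
          = M k k)
    (hb1 : ∀ l ≤ N, M 0 l = Tm * mlin N Tm Tp l)
    (hb2 : ∀ k ≤ N, M k N = mlin N Tm Tp k * Tp) :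
    ∀ k l : ℕ, k ≤ l → l ≤ N → M k l ≤ Mt N Tm Tp k l := by
  have hNpos : (0:ℝ) < (N:ℝ) := by
    have : 0 < N := by omega
    exact_mod_cast this
  set g : ℕ → ℕ → ℝ := fun k l => Mt N Tm Tp k l - M k l with hg
  suffices h : ∀ k l, k ≤ l → l ≤ N → 0 ≤ g k l by
    intro k l h1 h2
    have := h k l h1 h2
    rw [hg] at this
    simpa using this
  -- the triangle as a finite set, and the minimum of g over it
  have hTne : ((Finset.range (N+1) ×ˢ Finset.range (N+1)).filter
      fun p => p.1 ≤ p.2).Nonempty := by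
    refine ⟨(0,0), ?_⟩
    simp [Finset.mem_filter, Finset.mem_product]
  set T : Finset (ℕ × ℕ) := (Finset.range (N+1) ×ˢ Finset.range (N+1)).filter
      fun p => p.1 ≤ p.2 with hTdef
  set μ : ℝ := T.inf' hTne (fun p => g p.1 p.2) with hμdef
  have hμle : ∀ k l, k ≤ l → l ≤ N → μ ≤ g k l := by
    intro k l h1 h2
    rw [hμdef]
    exact Finset.inf'_le _ (show ((k, l) : ℕ × ℕ) ∈ T by
      simp only [hTdef, Finset.mem_filter, Finset.mem_product, Finset.mem_range]
      omega)
  -- the minimum is attained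
  obtain ⟨p, hp, hpe⟩ := Finset.exists_mem_eq_inf' hTne (fun p => g p.1 p.2)
  have hpmem : p.1 ≤ p.2 ∧ p.2 ≤ N := by
    simp only [hTdef, Finset.mem_filter, Finset.mem_product, Finset.mem_range] at hp
    omega
  have hpval : g p.1 p.2 = μ := by rw [hμdef]; exact hpe.symm
  clear_value g μ
  -- boundary nonnegativity of g
  have hbdL : ∀ l, l ≤ N → 0 ≤ g 0 l := by
    intro l hl
    simp only [hg]
    have := Mt_bd_left N Tm Tp hNpos l
    rw [hb1 l hl]
    linarith
  have hbdT : ∀ k, k ≤ N → 0 ≤ g k N := by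
    intro k hk
    simp only [hg]
    have := Mt_bd_top N Tm Tp hNpos k hk
    rw [hb2 k hk]
    linarith
  -- key: any point attaining the minimum forces μ ≥ 0
  have key : ∀ k l, k ≤ l → l ≤ N → g k l = μ → 0 ≤ μ := by
    intro k
    induction k using Nat.strong_induction_on with
    | _ k IH =>
      intro l hkl hlN hval
      rcases Nat.eq_zero_or_pos k with rfl | hkpos
      · -- left boundary
        have h0 := hbdL l hlN
        linarith
      · obtain ⟨a, rfl⟩ : ∃ a, k = a + 1 := ⟨k - 1, by omega⟩
        rcases eq_or_lt_of_le hlN with rfl | hlN'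
        · -- top boundary
          have h0 := hbdT (a+1) hkl
          linarith
        · -- interior: l < N
          rcases eq_or_lt_of_le hkl with hdiag | hlt
          · -- diagonal case k = l
            subst hdiag
            have hMeq := hiii (a+1) (by omega) (by omega)
            simp only [Nat.add_sub_cancel] at hMeq
            have hMteq := Mt_id_iii N Tm Tp hNpos a
            have e1 := hμle a a (le_refl a) (by omega)
            have e2 := hμle a (a+1) (by omega) (by omega)
            have e3 := hμle (a+2) (a+2) (le_refl _) (by omega)
            have e4 := hμle (a+1) (a+2) (by omega) (by omega)
            have hsum : (1/4) * (g a a + g a (a+1) + g (a+2) (a+2) + g (a+1) (a+2))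
                = g (a+1) (a+1) := by
              simp only [hg]; linarith
            have hle : g a a ≤ μ := by rw [hval] at hsum; linarith
            exact IH a (by omega) a (le_refl a) (by omega) (le_antisymm hle e1)
          · rcases eq_or_lt_of_le (show a + 2 ≤ l by omega) with hnd | hint
            · -- near-diagonal case l = k+1
              subst hnd
              have hMeq := hii (a+2) (by omega) (by omega)
              simp only [Nat.add_sub_cancel, show a+2-2 = a from rfl,
                show a+2-1 = a+1 from rfl] at hMeq
              have hMteq := Mt_id_ii N Tm Tp hNpos a
              have e1 := hμle a (a+2) (by omega) (by omega)
              have e2 := hμle (a+1) (a+3) (by omega) (by omega)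
              have e3 := hμle (a+1) (a+1) (le_refl _) (by omega)
              have e4 := hμle (a+2) (a+2) (le_refl _) (by omega)
              have hsum : (3/10) * (g a (a+2) + g (a+1) (a+3))
                  + (1/5) * (g (a+1) (a+1) + g (a+2) (a+2)) = g (a+1) (a+2) := by
                simp only [hg]; linarith
              have hle : g a (a+2) ≤ μ := by rw [hval] at hsum; linarith
              exact IH a (by omega) (a+2) (by omega) (by omega) (le_antisymm hle e1)
            · -- strict interior case
              obtain ⟨b, rfl⟩ : ∃ b, l = b + 1 := ⟨l - 1, by omega⟩
              have hMeq := hi (a+1) (b+1) (by omega) (by omega) (by omega)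
              simp only [Nat.add_sub_cancel] at hMeq
              have hMteq := Mt_id_i N Tm Tp hNpos a b (by omega)
              have e1 := hμle a (b+1) (by omega) (by omega)
              have e2 := hμle (a+2) (b+1) (by omega) (by omega)
              have e3 := hμle (a+1) b (by omega) (by omega)
              have e4 := hμle (a+1) (b+2) (by omega) (by omega)
              have hsum : (1/4) * (g a (b+1) + g (a+2) (b+1) + g (a+1) b + g (a+1) (b+2))
                  = g (a+1) (b+1) := by
                simp only [hg]; linarith
              have hle : g a (b+1) ≤ μ := by rw [hval] at hsum; linarith
              exact IH a (by omega) (b+1) (by omega) (by omega) (le_antisymm hle e1)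
  have hμ0 : 0 ≤ μ := key p.1 p.2 hpmem.1 hpmem.2 hpval
  intro k l h1 h2
  exact le_trans hμ0 (hμle k l h1 h2)
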